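/- A morphism of causal-nets is a contraction if and only if it can be written as a composition of finitely many morphisms each of which is an isomorphism or a simple contraction. -/

import Mathlib

open CategoryTheory

namespace CausalNets

/-- Acyclicity condition for raw directed-multigraph data: every directed cycle
has length zero. -/
def NoCycleData (V E : Type) (s t : E → V) : Prop :=
  letI : Quiver V := ⟨fun a b => { e : E // s e = a ∧ t e = b }⟩
  ∀ (v : V) (p : Quiver.Path v v), p.length = 0

/-- A causal-net: a finite acyclic directed multigraph (isolated vertices and
parallel edges allowed). -/
structure CausalNet where
  V : Type
  E : Type
  src : E → V
  tgt : E → V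
  fintypeV : Fintype V
  fintypeE : Fintype E
  acyclic : NoCycleData V E src tgt

attribute [instance] CausalNet.fintypeV CausalNet.fintypeE

instance CausalNet.quiver (G : CausalNet) : Quiver G.V :=
  ⟨fun a b => { e : G.E // G.src e = a ∧ G.tgt e = b }⟩

/-- The category `Cau` of causal-nets: a morphism `G ⟶ H` is a functor between
the path categories `Paths G.V ⥤ Paths H.V`. -/
instance : Category CausalNet where
  Hom G H := Paths G.V ⥤ Paths H.V
  id G := 𝟭 (Paths G.V)
  comp φ ψ := φ ⋙ ψ

variable {G H K : CausalNet}

/-- The action of a morphism of causal-nets on vertices (objects). -/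
def vmap (φ : G ⟶ H) : G.V → H.V := (φ : Paths G.V ⥤ Paths H.V).obj

/-- The action of a morphism of causal-nets on directed paths (morphisms). -/
def pmap (φ : G ⟶ H) {a b : G.V} (p : Quiver.Path a b) :
    Quiver.Path (vmap φ a) (vmap φ b) :=
  (φ : Paths G.V ⥤ Paths H.V).map p

/-- The quiver arrow corresponding to an edge. -/
def edgeHom (G : CausalNet) (e : G.E) : G.src e ⟶ G.tgt e := ⟨e, rfl, rfl⟩

/-- The directed path which is the image of the edge `e` under the morphism `φ`. -/
def edgePath (φ : G ⟶ H) (e : G.E) :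
    Quiver.Path (vmap φ (G.src e)) (vmap φ (G.tgt e)) :=
  pmap φ (Quiver.Hom.toPath (edgeHom G e))

/-- The underlying edge of a quiver arrow. -/
def homEdge {a b : G.V} (f : a ⟶ b) : G.E := Subtype.val f

/-- The list of edges traversed by a directed path. -/
def pathEdges : {a b : G.V} → Quiver.Path a b → List G.E
  | _, _, Quiver.Path.nil => []
  | _, _, Quiver.Path.cons p f => pathEdges p ++ [homEdge f]

/-- The list of vertices visited by a directed path (including endpoints). -/
def pathVertices : {a b : G.V} → Quiver.Path a b → List G.V
  | a, _, Quiver.Path.nil => [a]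
  | _, b, Quiver.Path.cons p _ => pathVertices p ++ [b]

/-- An edge `e` is a contraction of `φ` if `φ(e)` has length `0`. -/
def IsContractionEdge (φ : G ⟶ H) (e : G.E) : Prop := (edgePath φ e).length = 0

/-- An edge `e` is a segment of `φ` if `φ(e)` has length `1`. -/
def IsSegmentEdge (φ : G ⟶ H) (e : G.E) : Prop := (edgePath φ e).length = 1

/-- An edge `e` is a subdivision of `φ` if `φ(e)` has length at least `2`. -/
def IsSubdivisionEdge (φ : G ⟶ H) (e : G.E) : Prop := 2 ≤ (edgePath φ e).length

/-- `φ` maps the edge `e` to the length-one path consisting of the edge `h`. -/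
def MapsToEdge (φ : G ⟶ H) (e : G.E) (h : H.E) : Prop :=
  pathEdges (edgePath φ e) = [h]

/-- A quotient: a morphism with no null-vertex and no null-edge. -/
def IsQuotientMor (φ : G ⟶ H) : Prop :=
  (∀ v : H.V, ∃ w : G.V, vmap φ w = v) ∧ ∀ h : H.E, ∃ e : G.E, MapsToEdge φ e h

/-- A coarse-graining: a quotient with no subdivision. -/
def IsCoarseGraining (φ : G ⟶ H) : Prop :=
  IsQuotientMor φ ∧ ∀ e : G.E, ¬ IsSubdivisionEdge φ e

/-- A vertex-coarse-graining: a coarse-graining with no multiple-edge. -/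
def IsVertexCoarseGraining (φ : G ⟶ H) : Prop :=
  IsCoarseGraining φ ∧
  ∀ (h : H.E) (e₁ e₂ : G.E), MapsToEdge φ e₁ h → MapsToEdge φ e₂ h → e₁ = e₂

/-- An edge-coarse-graining: a coarse-graining with no multiple-vertex and no
contraction. -/
def IsEdgeCoarseGraining (φ : G ⟶ H) : Prop :=
  IsCoarseGraining φ ∧ Function.Injective (vmap φ) ∧ ∀ e : G.E, ¬ IsContractionEdge φ e

/-- A merging: a vertex-coarse-graining with no contraction. -/
def IsMerging (φ : G ⟶ H) : Prop :=
  IsVertexCoarseGraining φ ∧ ∀ e : G.E, ¬ IsContractionEdge φ e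

/-- A fusion: a coarse-graining with no contraction. -/
def IsFusion (φ : G ⟶ H) : Prop :=
  IsCoarseGraining φ ∧ ∀ e : G.E, ¬ IsContractionEdge φ e

/-- An inclusion: a morphism injective on vertices and on directed paths
(an injective-on-objects faithful functor). -/
def IsInclusion (φ : G ⟶ H) : Prop :=
  Function.Injective (vmap φ) ∧
  ∀ (a b : G.V) (p q : Quiver.Path a b), pmap φ p = pmap φ q → p = q

/-- An embedding: an inclusion with no subdivision. -/
def IsEmbedding (φ : G ⟶ H) : Prop :=
  IsInclusion φ ∧ ∀ e : G.E, ¬ IsSubdivisionEdge φ e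

/-- An immersion: an inclusion such that images of distinct subdivision edges
share no edge. -/
def IsImmersion (φ : G ⟶ H) : Prop :=
  IsInclusion φ ∧
  ∀ e₁ e₂ : G.E, e₁ ≠ e₂ → IsSubdivisionEdge φ e₁ → IsSubdivisionEdge φ e₂ →
    ∀ h : H.E, h ∈ pathEdges (edgePath φ e₁) → h ∉ pathEdges (edgePath φ e₂)

/-- The internal vertices of a directed path (all visited vertices except the
two endpoints). -/
def internalVertices {a b : G.V} (p : Quiver.Path a b) : List G.V :=
  ((pathVertices p).dropLast).tail

/-- A strong morphism: all internal vertices of images of subdivision edges are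
null-vertices. -/
def IsStrong (φ : G ⟶ H) : Prop :=
  ∀ e : G.E, IsSubdivisionEdge φ e →
    ∀ v ∈ internalVertices (edgePath φ e), ∀ w : G.V, vmap φ w ≠ v

/-- A vertex-disjoint morphism: images of distinct subdivision edges share no
internal vertex. -/
def IsVertexDisjoint (φ : G ⟶ H) : Prop :=
  ∀ e₁ e₂ : G.E, e₁ ≠ e₂ → IsSubdivisionEdge φ e₁ → IsSubdivisionEdge φ e₂ →
    ∀ v : H.V, v ∈ internalVertices (edgePath φ e₁) → v ∉ internalVertices (edgePath φ e₂)

/-- A topological embedding: a strong vertex-disjoint inclusion. -/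
def IsTopologicalEmbedding (φ : G ⟶ H) : Prop :=
  IsInclusion φ ∧ IsStrong φ ∧ IsVertexDisjoint φ

/-- The edge `e` covers the vertex `v` if `v` occurs on the path `φ(e)`. -/
def Covers (φ : G ⟶ H) (e : G.E) (v : H.V) : Prop :=
  v ∈ pathVertices (edgePath φ e)

/-- An isolated vertex: a vertex incident to no edge. -/
def IsolatedVertex (G : CausalNet) (v : G.V) : Prop :=
  ∀ e : G.E, G.src e ≠ v ∧ G.tgt e ≠ v

/-- A subdivision morphism: a topological embedding such that every non-isolated
vertex of the codomain is covered and every isolated vertex of the codomain is a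
simple-vertex. -/
def IsSubdivisionMor (φ : G ⟶ H) : Prop :=
  IsTopologicalEmbedding φ ∧
  (∀ v : H.V, ¬ IsolatedVertex H v → ∃ e : G.E, Covers φ e v) ∧
  (∀ v : H.V, IsolatedVertex H v → ∃! w : G.V, vmap φ w = v)

theorem mapPath_length {V W : Type} [Quiver V] [Quiver W] (F : V ⥤q W) :
    ∀ {a b : V} (p : Quiver.Path a b), (F.mapPath p).length = p.length := by
  intro a b p
  induction p with
  | nil => rfl
  | cons q f ih =>
      show ((F.mapPath q).cons (F.map f)).length = (q.cons f).length
      rw [Quiver.Path.length_cons, Quiver.Path.length_cons, ih]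

theorem noCycleData_of_map {V₁ E₁ : Type} (s₁ t₁ : E₁ → V₁) (G : CausalNet)
    (f : V₁ → G.V) (g : E₁ → G.E)
    (hs : ∀ e, G.src (g e) = f (s₁ e)) (ht : ∀ e, G.tgt (g e) = f (t₁ e)) :
    NoCycleData V₁ E₁ s₁ t₁ := by
  letI : Quiver V₁ := ⟨fun a b => { e : E₁ // s₁ e = a ∧ t₁ e = b }⟩
  intro v p
  let F : V₁ ⥤q G.V :=
    { obj := f
      map := fun {a b} e =>
        ⟨g (Subtype.val e), by rw [hs, (Subtype.prop e).1], by rw [ht, (Subtype.prop e).2]⟩ }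
  have h := G.acyclic (f v) (F.mapPath p)
  rw [mapPath_length] at h
  exact h

theorem noCycleData_of_lt {V E : Type} [Preorder V] (s t : E → V)
    (hlt : ∀ e, s e < t e) : NoCycleData V E s t := by
  letI : Quiver V := ⟨fun a b => { e : E // s e = a ∧ t e = b }⟩
  have key : ∀ {a b : V} (p : Quiver.Path a b), (a = b ∧ p.length = 0) ∨ a < b := by
    intro a b p
    induction p with
    | nil => exact Or.inl ⟨rfl, rfl⟩
    | cons q f ih =>
        have hcb := hlt (Subtype.val f)
        rw [(Subtype.prop f).1, (Subtype.prop f).2] at hcb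
        rcases ih with ⟨h, _⟩ | h
        · exact Or.inr (by rw [h]; exact hcb)
        · exact Or.inr (lt_trans h hcb)
  intro v p
  rcases key p with ⟨_, h⟩ | h
  · exact h
  · exact absurd h (lt_irrefl v)

/-- The sub-causal-net spanned by a set of vertices and a set of edges. -/
noncomputable def mkSub (G : CausalNet) (Vs : Set G.V) (Es : Set G.E)
    (hs : ∀ e ∈ Es, G.src e ∈ Vs) (ht : ∀ e ∈ Es, G.tgt e ∈ Vs) : CausalNet where
  V := Vs
  E := Es
  src e := ⟨G.src e.1, hs e.1 e.2⟩
  tgt e := ⟨G.tgt e.1, ht e.1 e.2⟩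
  fintypeV := Fintype.ofFinite _
  fintypeE := Fintype.ofFinite _
  acyclic := noCycleData_of_map _ _ G Subtype.val Subtype.val (fun _ => rfl) (fun _ => rfl)

/-- The fiber of a morphism at a vertex `v` of the codomain: the sub-causal-net
of the domain on the vertices mapped to `v` and the edges mapped to the identity
path at `v`. -/
noncomputable def fiber (φ : G ⟶ H) (v : H.V) : CausalNet :=
  mkSub G {w : G.V | vmap φ w = v}
    {e : G.E | IsContractionEdge φ e ∧ vmap φ (G.src e) = v}
    (fun _ he => he.2)
    (fun e he =>
      show vmap φ (G.tgt e) = v from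
        Quiver.Path.eq_of_length_zero (edgePath φ e) he.1 ▸ he.2)

/-- The underlying undirected (simple) graph of a causal-net. -/
def undirected (G : CausalNet) : SimpleGraph G.V where
  Adj v w := v ≠ w ∧ ∃ e : G.E, (G.src e = v ∧ G.tgt e = w) ∨ (G.src e = w ∧ G.tgt e = v)
  symm := by
    constructor
    rintro v w ⟨hne, e, he⟩
    exact ⟨hne.symm, e, he.symm⟩
  loopless := by
    constructor
    intro v h
    exact h.1 rfl

/-- A causal-net is connected if its underlying undirected graph is connected. -/
def Connected (G : CausalNet) : Prop := (undirected G).Connected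

/-- A causal-Tree: a causal-net whose simplification has a tree as underlying
undirected graph.  (Since a causal-net is acyclic, the underlying undirected
graph of its simplification is exactly `undirected G`.) -/
def IsCausalTree (G : CausalNet) : Prop := (undirected G).IsTree

/-- A contraction: a vertex-coarse-graining all of whose fibers are connected. -/
def IsContractionMor (φ : G ⟶ H) : Prop :=
  IsVertexCoarseGraining φ ∧ ∀ v : H.V, Connected (fiber φ v)

/-- A simple contraction: a contraction with exactly one non-trivial fiber, that
fiber consisting of two vertices together with all edges from the first to the
second. -/
def IsSimpleContraction (φ : G ⟶ H) : Prop :=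
  IsContractionMor φ ∧
  ∃ w₁ w₂ : G.V, w₁ ≠ w₂ ∧ vmap φ w₁ = vmap φ w₂ ∧
    (∃ e : G.E, G.src e = w₁ ∧ G.tgt e = w₂) ∧
    (∀ e : G.E, IsContractionEdge φ e ↔ (G.src e = w₁ ∧ G.tgt e = w₂)) ∧
    (∀ u u' : G.V, vmap φ u = vmap φ u' →
      u = u' ∨ ((u = w₁ ∨ u = w₂) ∧ (u' = w₁ ∨ u' = w₂)))

/-- A tree-contraction: a contraction all of whose fibers are causal-Trees. -/
def IsTreeContraction (φ : G ⟶ H) : Prop :=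
  IsContractionMor φ ∧ ∀ v : H.V, IsCausalTree (fiber φ v)

/-- A directed multi-path: a causal-net whose simplification is a directed path. -/
def IsDirectedMultiPath (K : CausalNet) : Prop :=
  ∃ (a b : K.V) (p : Quiver.Path a b),
    (pathVertices p).Nodup ∧ (∀ v : K.V, v ∈ pathVertices p) ∧
    ∀ e : K.E, ∃ h ∈ pathEdges p, K.src e = K.src h ∧ K.tgt e = K.tgt h

/-- A path-contraction: a vertex-coarse-graining all of whose fibers are
directed multi-paths. -/
def IsPathContraction (φ : G ⟶ H) : Prop :=
  IsVertexCoarseGraining φ ∧ ∀ v : H.V, IsDirectedMultiPath (fiber φ v)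

/-- A point: a causal-net with exactly one vertex and no edges. -/
def IsPoint (A : CausalNet) : Prop := (∃ v : A.V, ∀ w : A.V, w = v) ∧ IsEmpty A.E

/-- Reachability: there is a directed path from `a` to `b`. -/
def Reaches (G : CausalNet) (a b : G.V) : Prop := Nonempty (Quiver.Path a b)

/-- A coclique: a set of vertices no two distinct members of which are
comparable under the reachability order. -/
def IsCoclique (G : CausalNet) (S : Set G.V) : Prop :=
  ∀ a ∈ S, ∀ b ∈ S, a ≠ b → ¬ Reaches G a b

/-- A multi-edge: the nonempty set of all edges from one fixed vertex to another. -/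
def IsMultiEdge (G : CausalNet) (s : Set G.E) : Prop :=
  s.Nonempty ∧ ∃ a b : G.V, s = {e : G.E | G.src e = a ∧ G.tgt e = b}

/-- The pair of vertices whose multi-edge is contracted by a simple contraction. -/
def ContractedPair (φ : G ⟶ H) (w₁ w₂ : G.V) : Prop :=
  w₁ ≠ w₂ ∧ vmap φ w₁ = vmap φ w₂ ∧ (∃ e : G.E, G.src e = w₁ ∧ G.tgt e = w₂) ∧
  ∀ e : G.E, IsContractionEdge φ e ↔ (G.src e = w₁ ∧ G.tgt e = w₂)

/-- Two causal-nets are isomorphic in `Cau`. -/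
def IsIsomorphicTo (A B : CausalNet) : Prop := ∃ φ : A ⟶ B, IsIso φ

/-- A simple causal-net: at most one edge between any ordered pair of vertices. -/
def IsSimpleNet (G : CausalNet) : Prop :=
  ∀ e₁ e₂ : G.E, G.src e₁ = G.src e₂ → G.tgt e₁ = G.tgt e₂ → e₁ = e₂

/-- A harmonic causal-net: every fusion out of it is an isomorphism. -/
def Harmonic (G : CausalNet) : Prop :=
  ∀ (H : CausalNet) (φ : G ⟶ H), IsFusion φ → IsIso φ

/-- A hamiltonian path: a directed path visiting every vertex exactly once. -/
def HasHamiltonianPath (G : CausalNet) : Prop :=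
  ∃ (a b : G.V) (p : Quiver.Path a b),
    (pathVertices p).Nodup ∧ ∀ v : G.V, v ∈ pathVertices p

/-- Morphisms which can be written as a composition of finitely many morphisms
each satisfying `P`. -/
inductive IsCompOf (P : ∀ ⦃A B : CausalNet⦄, (A ⟶ B) → Prop) :
    ∀ {A B : CausalNet}, (A ⟶ B) → Prop
  | of {A B : CausalNet} (φ : A ⟶ B) : P φ → IsCompOf P φ
  | comp {A B C : CausalNet} (φ : A ⟶ B) (ψ : B ⟶ C) :
      IsCompOf P φ → IsCompOf P ψ → IsCompOf P (φ ≫ ψ)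

def IsoOrSimpleContraction : ∀ ⦃A B : CausalNet⦄, (A ⟶ B) → Prop :=
  fun _ _ φ => IsIso φ ∨ IsSimpleContraction φ

/-!
A morphism is a contraction iff it is a vertex-coarse-graining in which any two vertices with
the same image are joined by a chain of contracted edges (`isContractionMor_iff`). In this form
contractions are visibly closed under composition, and if `φ ≫ ψ` is a contraction and `φ` a
coarse-graining then `ψ` is a contraction; isomorphisms and simple contractions are contractions.

Conversely, a contraction without contracted edges is an isomorphism. Otherwise some contracted
edge `e₀` has no vertex strictly between its ends (take one whose interval is minimal). Merging
its ends and deleting its multi-edge keeps the net acyclic, the quotient map is a simple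
contraction, and the given contraction factors through it by a contraction out of a net with
one vertex less, so induction on the number of vertices concludes.
-/

theorem _root_.List.exists_eq_singleton_of_flatMap_eq_singleton {α β : Type*} {L : List α}
    {f : α → List β} {x : β} (h : L.flatMap f = [x]) (hf : ∀ y ∈ L, f y ≠ []) :
    ∃ y, L = [y] ∧ f y = [x] := by
  match L, h with
  | [], h => cases h
  | y :: L, h =>
    rw [List.flatMap_cons, List.append_eq_singleton_iff] at h
    obtain ⟨hy, -⟩ | ⟨hy, hL⟩ := h
    · exact absurd hy (hf y (List.mem_cons_self ..))
    · obtain rfl : L = [] := List.eq_nil_iff_forall_not_mem.mpr fun z hz =>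
        hf z (List.mem_cons_of_mem _ hz) (List.flatMap_eq_nil_iff.mp hL z hz)
      exact ⟨y, rfl, hy⟩

section Graphs

variable {V W : Type*} {Γ : SimpleGraph V} {f : V → W}

theorem _root_.SimpleGraph.Reachable.map_of_forall_adj {Γ' : SimpleGraph W}
    (hf : ∀ a b, Γ.Adj a b → Γ'.Reachable (f a) (f b)) {a b : V} (h : Γ.Reachable a b) :
    Γ'.Reachable (f a) (f b) := by
  obtain ⟨p⟩ := h
  induction p with
  | nil => rfl
  | cons hab _ ih => exact (hf _ _ hab).trans ih

theorem _root_.SimpleGraph.Reachable.eq_of_forall_adj (hf : ∀ a b, Γ.Adj a b → f a = f b)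
    {a b : V} (h : Γ.Reachable a b) : f a = f b :=
  SimpleGraph.reachable_bot.mp <|
    h.map_of_forall_adj (Γ' := ⊥) fun a b hab => SimpleGraph.reachable_bot.mpr (hf a b hab)

theorem _root_.SimpleGraph.Reachable.of_map {Γ' : SimpleGraph W}
    (hfib : ∀ a b, f a = f b → Γ.Reachable a b)
    (hlift : ∀ x y, Γ'.Adj x y → ∃ a b, f a = x ∧ f b = y ∧ Γ.Reachable a b)
    {a b : V} (h : Γ'.Reachable (f a) (f b)) : Γ.Reachable a b := by
  obtain ⟨p⟩ := h
  suffices ∀ x y (p : Γ'.Walk x y) a b, f a = x → f b = y → Γ.Reachable a b from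
    this _ _ p a b rfl rfl
  intro x y p
  induction p with
  | nil => exact fun a b ha hb => hfib a b (ha.trans hb.symm)
  | cons hxz _ ih =>
    intro a b ha hb
    obtain ⟨a', b', ha', hb', hab'⟩ := hlift _ _ hxz
    exact (hfib a a' (ha.trans ha'.symm)).trans (hab'.trans (ih b' b hb' hb))

theorem _root_.SimpleGraph.connected_induce_iff_of_forall_adj
    (hf : ∀ a b, Γ.Adj a b → f a = f b) (w : W) :
    (Γ.induce {a | f a = w}).Connected ↔
      (∃ a, f a = w) ∧ ∀ a b, f a = w → f b = w → Γ.Reachable a b := by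
  classical
  refine ⟨fun h => ⟨?_, fun a b ha hb => ?_⟩, fun ⟨⟨a, ha⟩, h⟩ => ?_⟩
  · obtain ⟨⟨a, ha⟩⟩ := h.nonempty
    exact ⟨a, ha⟩
  · exact (h.preconnected ⟨a, ha⟩ ⟨b, hb⟩).map (SimpleGraph.Embedding.induce _).toHom
  · have : Nonempty {a | f a = w} := ⟨⟨a, ha⟩⟩
    refine ⟨fun ⟨b, hb⟩ ⟨c, hc⟩ => ?_⟩
    obtain ⟨p⟩ := h b c hb hc
    exact ⟨p.induce _ fun x hx =>
      (SimpleGraph.Reachable.eq_of_forall_adj hf ⟨p.takeUntil x hx⟩).symm.trans hb⟩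

end Graphs

section Paths

open Quiver

@[simp] theorem pathEdges_nil (a : G.V) : pathEdges (Path.nil : Path a a) = [] := by
  simp [pathEdges]

@[simp] theorem pathEdges_cons {a b c : G.V} (p : Path a b) (f : b ⟶ c) :
    pathEdges (p.cons f) = pathEdges p ++ [homEdge f] := by
  simp [pathEdges]

theorem pathEdges_toPath {a b : G.V} (f : a ⟶ b) : pathEdges f.toPath = [homEdge f] := by
  simp [Hom.toPath]

theorem length_pathEdges {a b : G.V} (p : Path a b) : (pathEdges p).length = p.length := by
  induction p with
  | nil => simp
  | cons p f ih => simp [ih]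

theorem pathEdges_comp {a b c : G.V} (p : Path a b) (q : Path b c) :
    pathEdges (p.comp q) = pathEdges p ++ pathEdges q := by
  induction q with
  | nil => simp
  | cons q f ih => simp [ih]

theorem pathEdges_cast {a b a' b' : G.V} (ha : a = a') (hb : b = b') (p : Path a b) :
    pathEdges (p.cast ha hb) = pathEdges p := by
  subst ha hb; rfl

theorem eq_of_pathEdges_eq_nil {a b : G.V} {p : Path a b} (h : pathEdges p = []) :
    a = b :=
  Path.eq_of_length_zero p (by rw [← length_pathEdges, h]; rfl)

theorem endpoints_of_pathEdges_eq_singleton {a b : G.V} {p : Path a b} {e : G.E}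
    (h : pathEdges p = [e]) : G.src e = a ∧ G.tgt e = b := by
  cases p with
  | nil => simp at h
  | cons q f =>
    rw [pathEdges_cons, List.append_eq_singleton_iff] at h
    obtain ⟨hq, hf⟩ | ⟨-, h⟩ := h
    · obtain rfl := eq_of_pathEdges_eq_nil hq
      obtain rfl : homEdge f = e := List.singleton_inj.mp hf
      exact f.2
    · simp at h

/-- An arrow of a causal-net is determined by its edge. -/
theorem pathEdges_injective {a b : G.V} {p q : Path a b}
    (h : pathEdges p = pathEdges q) : p = q := by
  induction p with
  | nil =>
    cases q with
    | nil => rfl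
    | cons q g => simp at h
  | cons p f ih =>
    cases q with
    | nil => simp at h
    | cons q g =>
      rw [pathEdges_cons, pathEdges_cons] at h
      obtain ⟨hpq, hfg⟩ := List.append_inj' h rfl
      obtain ⟨e, rfl, hft⟩ := f
      obtain ⟨e', rfl, hgt⟩ := g
      obtain rfl : e = e' := List.singleton_inj.mp hfg
      rw [ih hpq]

def edgeImage (φ : G ⟶ H) (e : G.E) : List H.E := pathEdges (edgePath φ e)

theorem edgeImage_id (e : G.E) : edgeImage (𝟙 G) e = [e] := pathEdges_toPath _

theorem isContractionEdge_iff {φ : G ⟶ H} {e : G.E} :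
    IsContractionEdge φ e ↔ edgeImage φ e = [] := by
  rw [IsContractionEdge, edgeImage, ← length_pathEdges, List.length_eq_zero_iff]

theorem mapsToEdge_iff {φ : G ⟶ H} {e : G.E} {h : H.E} :
    MapsToEdge φ e h ↔ edgeImage φ e = [h] := Iff.rfl

theorem isSubdivisionEdge_iff {φ : G ⟶ H} {e : G.E} :
    IsSubdivisionEdge φ e ↔ 2 ≤ (edgeImage φ e).length := by
  rw [IsSubdivisionEdge, edgeImage, length_pathEdges]

theorem IsContractionEdge.vmap_eq {φ : G ⟶ H} {e : G.E} (he : IsContractionEdge φ e) :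
    vmap φ (G.src e) = vmap φ (G.tgt e) :=
  Path.eq_of_length_zero _ he

theorem MapsToEdge.vmap_src {φ : G ⟶ H} {e : G.E} {h : H.E} (he : MapsToEdge φ e h) :
    vmap φ (G.src e) = H.src h :=
  (endpoints_of_pathEdges_eq_singleton he).1.symm

theorem MapsToEdge.vmap_tgt {φ : G ⟶ H} {e : G.E} {h : H.E} (he : MapsToEdge φ e h) :
    vmap φ (G.tgt e) = H.tgt h :=
  (endpoints_of_pathEdges_eq_singleton he).2.symm

theorem pmap_nil (φ : G ⟶ H) (a : G.V) : pmap φ (Path.nil : Path a a) = Path.nil :=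
  (φ : Paths G.V ⥤ Paths H.V).map_id a

theorem pmap_comp (φ : G ⟶ H) {a b c : G.V} (p : Path a b) (q : Path b c) :
    pmap φ (p.comp q) = (pmap φ p).comp (pmap φ q) :=
  (φ : Paths G.V ⥤ Paths H.V).map_comp p q

theorem pathEdges_pmap (φ : G ⟶ H) {a b : G.V} (p : Path a b) :
    pathEdges (pmap φ p) = (pathEdges p).flatMap (edgeImage φ) := by
  induction p with
  | nil => rw [pmap_nil, pathEdges_nil, pathEdges_nil, List.flatMap_nil]
  | cons p f ih =>
    have hf : pathEdges (pmap φ f.toPath) = edgeImage φ (homEdge f) := by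
      obtain ⟨e, rfl, rfl⟩ := f
      rfl
    rw [← Path.comp_toPath_eq_cons, pmap_comp, pathEdges_comp, pathEdges_comp, ih, hf,
      List.flatMap_append, pathEdges_toPath, List.flatMap_singleton]

theorem edgeImage_comp (φ : G ⟶ H) (ψ : H ⟶ K) (e : G.E) :
    edgeImage (φ ≫ ψ) e = (edgeImage φ e).flatMap (edgeImage ψ) :=
  pathEdges_pmap ψ (edgePath φ e)

theorem edgeImage_comp_of_mapsToEdge {φ : G ⟶ H} (ψ : H ⟶ K) {e : G.E} {h : H.E}
    (he : MapsToEdge φ e h) : edgeImage (φ ≫ ψ) e = edgeImage ψ h := by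
  rw [edgeImage_comp, mapsToEdge_iff.mp he, List.flatMap_singleton]

theorem IsContractionEdge.comp {φ : G ⟶ H} {e : G.E} (he : IsContractionEdge φ e) (ψ : H ⟶ K) :
    IsContractionEdge (φ ≫ ψ) e := by
  rw [isContractionEdge_iff, edgeImage_comp, isContractionEdge_iff.mp he, List.flatMap_nil]

theorem pathEdges_eqToHom_conj {a b a' b' : Paths H.V} (ha : a' = a) (hb : b = b') (p : a ⟶ b) :
    pathEdges (eqToHom ha ≫ p ≫ eqToHom hb) = pathEdges (G := H) p := by
  subst ha hb
  simp only [eqToHom_refl, Category.id_comp, Category.comp_id]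

theorem hom_ext {φ ψ : G ⟶ H} (hv : ∀ v, vmap φ v = vmap ψ v)
    (he : ∀ e, edgeImage φ e = edgeImage ψ e) : φ = ψ := by
  refine Paths.ext_functor (funext hv) ?_
  rintro a b ⟨e, rfl, rfl⟩
  apply pathEdges_injective
  rw [pathEdges_eqToHom_conj]
  exact he e

def ofEdgePaths (f : G.V → H.V) (p : ∀ e : G.E, Path (f (G.src e)) (f (G.tgt e))) :
    G ⟶ H :=
  Paths.lift { obj := f, map := fun g => (p g.1).cast (congrArg f g.2.1) (congrArg f g.2.2) }

theorem edgeImage_ofEdgePaths (f : G.V → H.V)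
    (p : ∀ e : G.E, Path (f (G.src e)) (f (G.tgt e))) (e : G.E) :
    edgeImage (ofEdgePaths f p) e = pathEdges (p e) := by
  rw [edgeImage, edgePath, pmap, ofEdgePaths, Paths.lift_toPath]
  exact pathEdges_cast (G := H) rfl rfl (p e)

end Paths

section Reachability

open Quiver

theorem length_eq_zero_of_eq {a b : G.V} (p : Path a b) (h : a = b) : p.length = 0 := by
  subst h
  exact G.acyclic a p

theorem src_ne_tgt (e : G.E) : G.src e ≠ G.tgt e := fun h =>
  one_ne_zero (length_eq_zero_of_eq (edgeHom G e).toPath h)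

theorem Reaches.refl (a : G.V) : Reaches G a a := ⟨.nil⟩

theorem Reaches.trans {a b c : G.V} : Reaches G a b → Reaches G b c → Reaches G a c
  | ⟨p⟩, ⟨q⟩ => ⟨p.comp q⟩

theorem reaches_src_tgt (e : G.E) : Reaches G (G.src e) (G.tgt e) := ⟨(edgeHom G e).toPath⟩

theorem Reaches.antisymm {a b : G.V} : Reaches G a b → Reaches G b a → a = b
  | ⟨p⟩, ⟨q⟩ => by
    have h := length_eq_zero_of_eq (p.comp q) rfl
    rw [Path.length_comp] at h
    exact Path.eq_of_length_zero p (by omega)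

theorem Reaches.exists_edge {a b : G.V} (hab : Reaches G a b) (hne : a ≠ b) :
    ∃ f : G.E, G.src f = a ∧ Reaches G (G.tgt f) b := by
  obtain ⟨p⟩ := hab
  induction p with
  | nil => exact absurd rfl hne
  | @cons c b q g ih =>
    by_cases hac : a = c
    · exact ⟨homEdge g, g.2.1.trans hac.symm, by rw [homEdge, g.2.2]; exact .refl b⟩
    · obtain ⟨f, hf, hfc⟩ := ih hac
      exact ⟨f, hf, hfc.trans ⟨g.toPath⟩⟩

/-- The image of `e` followed by that of the path lies on a directed cycle of `H`. -/
theorem isContractionEdge_of_reaches (φ : G ⟶ H) {e : G.E} {b : G.V}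
    (hr : Reaches G (G.tgt e) b) (hv : vmap φ (G.src e) = vmap φ b) :
    IsContractionEdge φ e := by
  obtain ⟨p⟩ := hr
  have h := length_eq_zero_of_eq (pmap φ ((edgeHom G e).toPath.comp p)) hv
  rw [pmap_comp, Path.length_comp] at h
  exact Nat.eq_zero_of_add_eq_zero_right h

end Reachability

section CoarseGraining

variable {φ : G ⟶ H} {ψ : H ⟶ K}

theorem isContractionEdge_or_mapsToEdge {e : G.E} (he : ¬ IsSubdivisionEdge φ e) :
    IsContractionEdge φ e ∨ ∃ h, MapsToEdge φ e h := by
  rw [isSubdivisionEdge_iff] at he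
  rw [isContractionEdge_iff]
  match hl : edgeImage φ e, he with
  | [], _ => exact .inl rfl
  | [h], _ => exact .inr ⟨h, hl⟩
  | _ :: _ :: _, he => exact absurd (by simp) he

theorem MapsToEdge.of_comp (hφ : ∀ e, ¬ IsSubdivisionEdge φ e) {e : G.E} {k : K.E}
    (he : MapsToEdge (φ ≫ ψ) e k) : ∃ h, MapsToEdge φ e h ∧ MapsToEdge ψ h k := by
  rcases isContractionEdge_or_mapsToEdge (hφ e) with hc | ⟨h, hh⟩
  · have := isContractionEdge_iff.mp (hc.comp ψ)
    rw [mapsToEdge_iff, this] at he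
    cases he
  · exact ⟨h, hh, (edgeImage_comp_of_mapsToEdge ψ hh).symm.trans he⟩

theorem IsVertexCoarseGraining.comp (hφ : IsVertexCoarseGraining φ)
    (hψ : IsVertexCoarseGraining ψ) : IsVertexCoarseGraining (φ ≫ ψ) := by
  obtain ⟨⟨⟨hvφ, heφ⟩, hsφ⟩, hmφ⟩ := hφ
  obtain ⟨⟨⟨hvψ, heψ⟩, hsψ⟩, hmψ⟩ := hψ
  refine ⟨⟨⟨fun v => ?_, fun k => ?_⟩, fun e => ?_⟩, fun k e₁ e₂ h₁ h₂ => ?_⟩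
  · obtain ⟨u, rfl⟩ := hvψ v
    obtain ⟨w, rfl⟩ := hvφ u
    exact ⟨w, rfl⟩
  · obtain ⟨h, hh⟩ := heψ k
    obtain ⟨e, he⟩ := heφ h
    exact ⟨e, (edgeImage_comp_of_mapsToEdge ψ he).trans hh⟩
  · rcases isContractionEdge_or_mapsToEdge (hsφ e) with hc | ⟨h, hh⟩
    · rw [isSubdivisionEdge_iff, isContractionEdge_iff.mp (hc.comp ψ)]
      simp
    · rw [isSubdivisionEdge_iff, edgeImage_comp_of_mapsToEdge ψ hh, ← isSubdivisionEdge_iff]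
      exact hsψ h
  · obtain ⟨h, hh₁, hk₁⟩ := h₁.of_comp hsφ
    obtain ⟨h', hh₂, hk₂⟩ := h₂.of_comp hsφ
    obtain rfl := hmψ k h h' hk₁ hk₂
    exact hmφ h e₁ e₂ hh₁ hh₂

theorem IsVertexCoarseGraining.of_comp (hφ : IsCoarseGraining φ)
    (h : IsVertexCoarseGraining (φ ≫ ψ)) : IsVertexCoarseGraining ψ := by
  obtain ⟨⟨hvφ, heφ⟩, hsφ⟩ := hφ
  obtain ⟨⟨⟨hv, he⟩, hs⟩, hm⟩ := h
  refine ⟨⟨⟨fun v => ?_, fun k => ?_⟩, fun h => ?_⟩, fun k h₁ h₂ hk₁ hk₂ => ?_⟩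
  · obtain ⟨w, rfl⟩ := hv v
    exact ⟨vmap φ w, rfl⟩
  · obtain ⟨e, hek⟩ := he k
    obtain ⟨h, -, hk⟩ := hek.of_comp hsφ
    exact ⟨h, hk⟩
  · obtain ⟨e, he⟩ := heφ h
    rw [isSubdivisionEdge_iff, ← edgeImage_comp_of_mapsToEdge ψ he, ← isSubdivisionEdge_iff]
    exact hs e
  · obtain ⟨e₁, he₁⟩ := heφ h₁
    obtain ⟨e₂, he₂⟩ := heφ h₂
    obtain rfl := hm k e₁ e₂ ((edgeImage_comp_of_mapsToEdge ψ he₁).trans hk₁)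
      ((edgeImage_comp_of_mapsToEdge ψ he₂).trans hk₂)
    exact List.singleton_inj.mp (he₁.symm.trans he₂)

end CoarseGraining

def contractedGraph (φ : G ⟶ H) : SimpleGraph G.V :=
  SimpleGraph.fromRel fun a b => ∃ e, IsContractionEdge φ e ∧ G.src e = a ∧ G.tgt e = b

theorem contractedGraph_adj_src_tgt {φ : G ⟶ H} {e : G.E} (he : IsContractionEdge φ e) :
    (contractedGraph φ).Adj (G.src e) (G.tgt e) :=
  ⟨src_ne_tgt e, .inl ⟨e, he, rfl, rfl⟩⟩

theorem vmap_eq_of_contractedGraph_adj {φ : G ⟶ H} {a b : G.V}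
    (h : (contractedGraph φ).Adj a b) : vmap φ a = vmap φ b := by
  obtain ⟨-, ⟨e, he, rfl, rfl⟩ | ⟨e, he, rfl, rfl⟩⟩ := h
  exacts [he.vmap_eq, he.vmap_eq.symm]

theorem reachable_map_of_contractedGraph {φ : G ⟶ H} {W : Type*} (Γ : SimpleGraph W)
    (g : G.V → W) (hg : ∀ e, IsContractionEdge φ e → Γ.Reachable (g (G.src e)) (g (G.tgt e)))
    {a b : G.V} (h : (contractedGraph φ).Reachable a b) : Γ.Reachable (g a) (g b) := by
  refine h.map_of_forall_adj fun a b hab => ?_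
  obtain ⟨-, ⟨e, he, rfl, rfl⟩ | ⟨e, he, rfl, rfl⟩⟩ := hab
  exacts [hg e he, (hg e he).symm]

theorem undirected_fiber (φ : G ⟶ H) (v : H.V) :
    undirected (fiber φ v) = (contractedGraph φ).induce {w | vmap φ w = v} := by
  ext ⟨x, hx⟩ ⟨y, hy⟩
  simp only [fiber, mkSub, Set.mem_ofPred_eq, undirected, ne_eq, Subtype.exists,
    Subtype.mk.injEq, exists_prop, contractedGraph, SimpleGraph.comap_adj,
    Function.Embedding.subtype_apply, SimpleGraph.fromRel_adj, and_congr_right_iff]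
  intro _
  constructor
  · rintro ⟨e, ⟨he, -⟩, ⟨rfl, rfl⟩ | ⟨rfl, rfl⟩⟩
    exacts [.inl ⟨e, he, rfl, rfl⟩, .inr ⟨e, he, rfl, rfl⟩]
  · rintro (⟨e, he, rfl, rfl⟩ | ⟨e, he, rfl, rfl⟩)
    exacts [⟨e, ⟨he, hx⟩, .inl ⟨rfl, rfl⟩⟩, ⟨e, ⟨he, hy⟩, .inr ⟨rfl, rfl⟩⟩]

theorem connected_fiber_iff (φ : G ⟶ H) (v : H.V) :
    Connected (fiber φ v) ↔
      (∃ a, vmap φ a = v) ∧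
        ∀ a b, vmap φ a = v → vmap φ b = v → (contractedGraph φ).Reachable a b := by
  rw [Connected, undirected_fiber]
  exact SimpleGraph.connected_induce_iff_of_forall_adj (fun _ _ => vmap_eq_of_contractedGraph_adj) v

theorem isContractionMor_iff {φ : G ⟶ H} :
    IsContractionMor φ ↔
      IsVertexCoarseGraining φ ∧
        ∀ a b, vmap φ a = vmap φ b → (contractedGraph φ).Reachable a b := by
  simp only [IsContractionMor, connected_fiber_iff]
  exact ⟨fun ⟨hφ, h⟩ => ⟨hφ, fun a b hab => (h (vmap φ b)).2 a b hab rfl⟩,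
    fun ⟨hφ, h⟩ => ⟨hφ, fun v => ⟨hφ.1.1.1 v, fun a b ha hb => h a b (ha.trans hb.symm)⟩⟩⟩

section Contractions

variable {φ : G ⟶ H} {ψ : H ⟶ K}

theorem contractedGraph_le_comp (φ : G ⟶ H) (ψ : H ⟶ K) :
    contractedGraph φ ≤ contractedGraph (φ ≫ ψ) := by
  rintro a b ⟨hab, ⟨e, he, rfl, rfl⟩ | ⟨e, he, rfl, rfl⟩⟩
  exacts [⟨hab, .inl ⟨e, he.comp ψ, rfl, rfl⟩⟩, ⟨hab, .inr ⟨e, he.comp ψ, rfl, rfl⟩⟩]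

theorem IsContractionMor.comp (hφ : IsContractionMor φ) (hψ : IsContractionMor ψ) :
    IsContractionMor (φ ≫ ψ) := by
  rw [isContractionMor_iff] at hφ hψ ⊢
  refine ⟨hφ.1.comp hψ.1, fun a b hab => .of_map (f := vmap φ)
    (fun a b hab => (hφ.2 a b hab).mono (contractedGraph_le_comp φ ψ)) ?_ (hψ.2 _ _ hab)⟩
  have lift (h : H.E) (hh : IsContractionEdge ψ h) : ∃ e, MapsToEdge φ e h ∧
      (contractedGraph (φ ≫ ψ)).Adj (G.src e) (G.tgt e) := by
    obtain ⟨e, he⟩ := hφ.1.1.1.2 h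
    refine ⟨e, he, contractedGraph_adj_src_tgt ?_⟩
    rw [isContractionEdge_iff, edgeImage_comp_of_mapsToEdge ψ he, ← isContractionEdge_iff]
    exact hh
  rintro x y ⟨-, ⟨h, hh, rfl, rfl⟩ | ⟨h, hh, rfl, rfl⟩⟩ <;> obtain ⟨e, he, hadj⟩ := lift h hh
  exacts [⟨_, _, he.vmap_src, he.vmap_tgt, hadj.reachable⟩,
    ⟨_, _, he.vmap_tgt, he.vmap_src, hadj.symm.reachable⟩]

theorem IsContractionMor.of_comp (hφ : IsCoarseGraining φ) (h : IsContractionMor (φ ≫ ψ)) :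
    IsContractionMor ψ := by
  rw [isContractionMor_iff] at h ⊢
  refine ⟨h.1.of_comp hφ, fun x y hxy => ?_⟩
  obtain ⟨a, rfl⟩ := hφ.1.1 x
  obtain ⟨b, rfl⟩ := hφ.1.1 y
  refine reachable_map_of_contractedGraph _ _ (fun e he => ?_) (h.2 a b hxy)
  rcases isContractionEdge_or_mapsToEdge (hφ.2 e) with hc | ⟨h, hh⟩
  · rw [hc.vmap_eq]
  · rw [hh.vmap_src, hh.vmap_tgt]
    refine (contractedGraph_adj_src_tgt ?_).reachable
    rw [isContractionEdge_iff, ← edgeImage_comp_of_mapsToEdge ψ hh, ← isContractionEdge_iff]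
    exact he

end Contractions

theorem exists_mapsToEdge_of_isIso (φ : G ⟶ H) [IsIso φ] (e : G.E) :
    ∃ h, MapsToEdge φ e h ∧ MapsToEdge (inv φ) h e := by
  have hφ : (edgeImage φ e).flatMap (edgeImage (inv φ)) = [e] := by
    rw [← edgeImage_comp, IsIso.hom_inv_id, edgeImage_id]
  refine List.exists_eq_singleton_of_flatMap_eq_singleton hφ
    fun h _ (hh : edgeImage (inv φ) h = []) => ?_
  have hinv := edgeImage_comp (inv φ) φ h
  rw [IsIso.inv_hom_id, edgeImage_id, hh, List.flatMap_nil] at hinv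
  cases hinv

theorem isContractionMor_of_isIso (φ : G ⟶ H) [IsIso φ] : IsContractionMor φ := by
  have hleft (v : G.V) : vmap (inv φ) (vmap φ v) = v :=
    congrArg (vmap · v) (IsIso.hom_inv_id φ)
  have hright (v : H.V) : vmap φ (vmap (inv φ) v) = v :=
    congrArg (vmap · v) (IsIso.inv_hom_id φ)
  rw [isContractionMor_iff]
  refine ⟨⟨⟨⟨fun v => ⟨_, hright v⟩, fun h => ?_⟩, fun e => ?_⟩, fun h e₁ e₂ h₁ h₂ => ?_⟩,
    fun a b hab => ?_⟩
  · obtain ⟨e, -, he⟩ := exists_mapsToEdge_of_isIso (inv φ) h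
    rw [IsIso.inv_inv] at he
    exact ⟨e, he⟩
  · obtain ⟨h, he, -⟩ := exists_mapsToEdge_of_isIso φ e
    rw [isSubdivisionEdge_iff, mapsToEdge_iff.mp he]
    simp
  · obtain ⟨h₁', he₁, hinv₁⟩ := exists_mapsToEdge_of_isIso φ e₁
    obtain ⟨h₂', he₂, hinv₂⟩ := exists_mapsToEdge_of_isIso φ e₂
    obtain rfl := List.singleton_inj.mp (he₁.symm.trans h₁)
    obtain rfl := List.singleton_inj.mp (he₂.symm.trans h₂)
    exact List.singleton_inj.mp (hinv₁.symm.trans hinv₂)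
  · rw [← hleft a, hab, hleft b]

theorem isIso_of_isContractionMor {φ : G ⟶ H} (hφ : IsContractionMor φ)
    (hnc : ∀ e, ¬ IsContractionEdge φ e) : IsIso φ := by
  rw [isContractionMor_iff] at hφ
  obtain ⟨⟨⟨⟨hvsurj, hesurj⟩, hs⟩, hm⟩, hfib⟩ := hφ
  have hvinj : Function.Injective (vmap φ) := fun a b hab =>
    SimpleGraph.reachable_bot.mp <| reachable_map_of_contractedGraph ⊥ id
      (fun e he => absurd he (hnc e)) (hfib a b hab)
  choose F hF using fun e => (isContractionEdge_or_mapsToEdge (hs e)).resolve_left (hnc e)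
  have hF_bij : Function.Bijective F := by
    refine ⟨fun e₁ e₂ h => hm _ e₁ e₂ (hF e₁) (h ▸ hF e₂), fun h => ?_⟩
    obtain ⟨e, he⟩ := hesurj h
    exact ⟨e, List.singleton_inj.mp ((hF e).symm.trans he)⟩
  let vE := Equiv.ofBijective _ ⟨hvinj, hvsurj⟩
  let eE := Equiv.ofBijective _ hF_bij
  have hsrc (h : H.E) : G.src (eE.symm h) = vE.symm (H.src h) := hvinj <| by
    rw [(hF _).vmap_src]
    exact (congrArg H.src (eE.apply_symm_apply h)).trans (vE.apply_symm_apply _).symm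
  have htgt (h : H.E) : G.tgt (eE.symm h) = vE.symm (H.tgt h) := hvinj <| by
    rw [(hF _).vmap_tgt]
    exact (congrArg H.tgt (eE.apply_symm_apply h)).trans (vE.apply_symm_apply _).symm
  let ψ : H ⟶ G :=
    ofEdgePaths vE.symm fun h => (edgeHom G (eE.symm h)).toPath.cast (hsrc h) (htgt h)
  have hψ (h : H.E) : edgeImage ψ h = [eE.symm h] := by
    rw [edgeImage_ofEdgePaths, pathEdges_cast, pathEdges_toPath]
    rfl
  refine ⟨⟨ψ, hom_ext (fun v => vE.symm_apply_apply v) fun e => ?_,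
    hom_ext (fun v => vE.apply_symm_apply v) fun h => ?_⟩⟩
  · rw [edgeImage_comp_of_mapsToEdge ψ (hF e), hψ, edgeImage_id]
    exact congrArg ([·]) (eE.symm_apply_apply e)
  · rw [edgeImage_comp, hψ, List.flatMap_singleton, mapsToEdge_iff.mp (hF _), edgeImage_id]
    exact congrArg ([·]) (eE.apply_symm_apply h)

def reachInterval (G : CausalNet) (a b : G.V) : Set G.V := {x | Reaches G a x ∧ Reaches G x b}

def IsCoverEdge (G : CausalNet) (e : G.E) : Prop :=
  reachInterval G (G.src e) (G.tgt e) ⊆ {G.src e, G.tgt e}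

/-- A contraction edge whose interval is minimal is a cover edge: the first edge of a path
through a vertex strictly inside would be a contraction edge with a smaller interval. -/
theorem exists_isCoverEdge_isContractionEdge {φ : G ⟶ H} {e : G.E}
    (he : IsContractionEdge φ e) : ∃ e₀, IsContractionEdge φ e₀ ∧ IsCoverEdge G e₀ := by
  obtain ⟨e₀, he₀, hmin⟩ := exists_minimalFor_of_wellFoundedLT (IsContractionEdge φ)
    (fun e => reachInterval G (G.src e) (G.tgt e)) ⟨e, he⟩
  refine ⟨e₀, he₀, fun x ⟨h₁, h₂⟩ => ?_⟩
  by_contra! hx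
  simp only [Set.mem_insert_iff, Set.mem_singleton_iff, not_or] at hx
  obtain ⟨f, hf, hfx⟩ := h₁.exists_edge (Ne.symm hx.1)
  have hft : Reaches G (G.tgt f) (G.tgt e₀) := hfx.trans h₂
  have hfc : IsContractionEdge φ f :=
    isContractionEdge_of_reaches φ hft (by rw [hf]; exact he₀.vmap_eq)
  have hsub : reachInterval G (G.src f) (G.tgt f) ⊆ reachInterval G (G.src e₀) (G.tgt e₀) :=
    fun z ⟨hz₁, hz₂⟩ => ⟨hf ▸ hz₁, hz₂.trans hft⟩
  obtain ⟨-, htf⟩ := hmin hfc hsub ⟨reaches_src_tgt e₀, .refl _⟩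
  exact hx.2 (h₂.antisymm (htf.trans hfx))

section Contract

variable (G : CausalNet) (e₀ : G.E)

def IsParallel (e e' : G.E) : Prop := G.src e = G.src e' ∧ G.tgt e = G.tgt e'

noncomputable def contractVertex (v : G.V) : {v : G.V // v ≠ G.tgt e₀} :=
  open Classical in
  if h : v = G.tgt e₀ then ⟨G.src e₀, src_ne_tgt e₀⟩ else ⟨v, h⟩

/-- Reachability in `G` after merging the ends of `e₀`. -/
def MergedReaches (a b : G.V) : Prop :=
  Reaches G a b ∨ (Reaches G a (G.tgt e₀) ∧ Reaches G (G.src e₀) b)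

variable {G e₀}

theorem contractVertex_eq_iff (v : G.V) (u : {v : G.V // v ≠ G.tgt e₀}) :
    contractVertex G e₀ v = u ↔ v = u.val ∨ (u.val = G.src e₀ ∧ v = G.tgt e₀) := by
  unfold contractVertex
  split_ifs with h
  · subst h
    refine ⟨fun hu => .inr ⟨congrArg Subtype.val hu.symm, rfl⟩, ?_⟩
    rintro (hu | ⟨hu, -⟩)
    exacts [absurd hu.symm u.2, Subtype.ext hu.symm]
  · refine ⟨fun hu => .inl (congrArg Subtype.val hu), ?_⟩
    rintro (hu | ⟨-, hu⟩)
    exacts [Subtype.ext hu, absurd hu h]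

theorem contractVertex_of_ne {v : G.V} (h : v ≠ G.tgt e₀) : contractVertex G e₀ v = ⟨v, h⟩ :=
  dif_neg h

theorem contractVertex_src_eq_tgt :
    contractVertex G e₀ (G.src e₀) = contractVertex G e₀ (G.tgt e₀) := by
  rw [contractVertex_of_ne (src_ne_tgt e₀), contractVertex, dif_pos rfl]

theorem eq_or_of_contractVertex_eq {a b : G.V}
    (h : contractVertex G e₀ a = contractVertex G e₀ b) :
    a = b ∨ (a = G.src e₀ ∨ a = G.tgt e₀) ∧ (b = G.src e₀ ∨ b = G.tgt e₀) := by
  rcases (contractVertex_eq_iff a _).mp h with ha | ⟨hu, ha⟩ <;>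
    rcases (contractVertex_eq_iff b _).mp rfl with hb | ⟨hv, hb⟩
  · exact .inl (ha.trans hb.symm)
  · exact .inr ⟨.inl (ha.trans hv), .inr hb⟩
  · exact .inr ⟨.inr ha, .inl (hb.trans hu)⟩
  · exact .inl (ha.trans hb.symm)

theorem MergedReaches.trans {a b c : G.V} :
    MergedReaches G e₀ a b → MergedReaches G e₀ b c → MergedReaches G e₀ a c := by
  rintro (hab | ⟨hab₁, hab₂⟩) (hbc | ⟨hbc₁, hbc₂⟩)
  exacts [.inl (hab.trans hbc), .inr ⟨hab.trans hbc₁, hbc₂⟩, .inr ⟨hab₁, hab₂.trans hbc⟩,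
    .inr ⟨hab₁, hbc₂⟩]

theorem mergedReaches_contractVertex (v : G.V) :
    MergedReaches G e₀ (contractVertex G e₀ v).val v ∧
      MergedReaches G e₀ v (contractVertex G e₀ v).val := by
  rcases (contractVertex_eq_iff v _).mp rfl with h | ⟨h₁, h₂⟩
  · rw [← h]
    exact ⟨.inl (.refl v), .inl (.refl v)⟩
  · rw [h₁, h₂]
    exact ⟨.inl (reaches_src_tgt e₀), .inr ⟨.refl _, .refl _⟩⟩

theorem not_mergedReaches_tgt_src (hc : IsCoverEdge G e₀) {e : G.E}
    (he : ¬ IsParallel G e e₀) : ¬ MergedReaches G e₀ (G.tgt e) (G.src e) := by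
  have hne := src_ne_tgt e
  rintro (h | ⟨h₁, h₂⟩)
  · exact hne ((reaches_src_tgt e).antisymm h)
  · have hs := hc ⟨h₂, (reaches_src_tgt e).trans h₁⟩
    have ht := hc ⟨h₂.trans (reaches_src_tgt e), h₁⟩
    simp only [Set.mem_insert_iff, Set.mem_singleton_iff] at hs ht
    rcases hs with hs | hs
    · rcases ht with ht | ht
      exacts [hne (hs.trans ht.symm), he ⟨hs, ht⟩]
    · exact hne ((reaches_src_tgt e).antisymm (hs ▸ h₁))

theorem noCycleData_contract (hc : IsCoverEdge G e₀) :
    NoCycleData {v : G.V // v ≠ G.tgt e₀} {e : G.E // ¬ IsParallel G e e₀}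
      (fun e => contractVertex G e₀ (G.src e.1)) (fun e => contractVertex G e₀ (G.tgt e.1)) := by
  let : Preorder G.V :=
    { le := MergedReaches G e₀, le_refl a := .inl (.refl a), le_trans _ _ _ := .trans }
  let : Preorder {v : G.V // v ≠ G.tgt e₀} := Preorder.lift Subtype.val
  refine noCycleData_of_lt _ _ fun e => ?_
  have hlt : G.src e.1 < G.tgt e.1 :=
    lt_iff_le_not_ge.mpr ⟨.inl (reaches_src_tgt e.1), not_mergedReaches_tgt_src hc e.2⟩
  show (contractVertex G e₀ (G.src e.1)).val < (contractVertex G e₀ (G.tgt e.1)).val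
  exact lt_of_le_of_lt (mergedReaches_contractVertex _).1
    (lt_of_lt_of_le hlt (mergedReaches_contractVertex _).2)

/-- `G` with the ends of `e₀` merged into the vertex `G.src e₀` and the multi-edge of `e₀`
deleted. -/
noncomputable def contractNet (hc : IsCoverEdge G e₀) : CausalNet where
  V := {v : G.V // v ≠ G.tgt e₀}
  E := {e : G.E // ¬ IsParallel G e e₀}
  src e := contractVertex G e₀ (G.src e.1)
  tgt e := contractVertex G e₀ (G.tgt e.1)
  fintypeV := Fintype.ofFinite _
  fintypeE := Fintype.ofFinite _
  acyclic := noCycleData_contract hc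

theorem card_contractNet_lt (hc : IsCoverEdge G e₀) :
    Nat.card (contractNet hc).V < Nat.card G.V :=
  Finite.card_subtype_lt (x := G.tgt e₀) (not_not.mpr rfl)

end Contract

section ContractHom

open Quiver

variable {e₀ : G.E} (hc : IsCoverEdge G e₀)

noncomputable def contractHom : G ⟶ contractNet hc :=
  open Classical in
  ofEdgePaths (contractVertex G e₀) fun e =>
    if h : IsParallel G e e₀ then
      Path.nil.cast rfl (by rw [h.1, h.2]; exact contractVertex_src_eq_tgt)
    else (edgeHom (contractNet hc) ⟨e, h⟩).toPath

theorem edgeImage_contractHom_of_isParallel {e : G.E} (h : IsParallel G e e₀) :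
    edgeImage (contractHom hc) e = [] := by
  classical
  refine (edgeImage_ofEdgePaths _ _ e).trans <| (apply_dite pathEdges _ _ _).trans <|
    (dif_pos h).trans ?_
  exact (pathEdges_cast _ _ _).trans (pathEdges_nil _)

theorem edgeImage_contractHom_of_not_isParallel {e : G.E} (h : ¬ IsParallel G e e₀) :
    edgeImage (contractHom hc) e = [⟨e, h⟩] := by
  classical
  refine (edgeImage_ofEdgePaths _ _ e).trans <| (apply_dite pathEdges _ _ _).trans <|
    (dif_neg h).trans ?_
  exact pathEdges_toPath _

theorem isContractionEdge_contractHom_iff {e : G.E} :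
    IsContractionEdge (contractHom hc) e ↔ IsParallel G e e₀ := by
  by_cases h : IsParallel G e e₀
  · exact iff_of_true (isContractionEdge_iff.mpr (edgeImage_contractHom_of_isParallel hc h)) h
  · refine iff_of_false (fun he => ?_) h
    cases (isContractionEdge_iff.mp he).symm.trans (edgeImage_contractHom_of_not_isParallel hc h)

theorem isContractionMor_contractHom : IsContractionMor (contractHom hc) := by
  rw [isContractionMor_iff]
  refine ⟨⟨⟨⟨fun u => ⟨u.1, contractVertex_of_ne u.2⟩, fun k => ⟨k.1,
    edgeImage_contractHom_of_not_isParallel hc k.2⟩⟩, fun e => ?_⟩, fun k e₁ e₂ h₁ h₂ => ?_⟩,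
    fun a b hab => ?_⟩
  · rw [isSubdivisionEdge_iff]
    by_cases h : IsParallel G e e₀
    · rw [edgeImage_contractHom_of_isParallel hc h]
      exact Nat.not_succ_le_zero 1
    · rw [edgeImage_contractHom_of_not_isParallel hc h]
      exact Nat.not_succ_le_self 1
  · have hne {e : G.E} (he : MapsToEdge (contractHom hc) e k) : ¬ IsParallel G e e₀ :=
      fun h => by
        rw [mapsToEdge_iff, edgeImage_contractHom_of_isParallel hc h] at he
        cases he
    rw [mapsToEdge_iff, edgeImage_contractHom_of_not_isParallel hc (hne h₁)] at h₁
    rw [mapsToEdge_iff, edgeImage_contractHom_of_not_isParallel hc (hne h₂)] at h₂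
    exact congrArg Subtype.val (List.singleton_inj.mp (h₁.trans h₂.symm))
  · have h₀ : (contractedGraph (contractHom hc)).Reachable (G.src e₀) (G.tgt e₀) :=
      (contractedGraph_adj_src_tgt
        ((isContractionEdge_contractHom_iff hc).mpr ⟨rfl, rfl⟩)).reachable
    rcases eq_or_of_contractVertex_eq hab with rfl | ⟨rfl | rfl, rfl | rfl⟩
    exacts [.rfl, .rfl, h₀, h₀.symm, .rfl]

theorem isSimpleContraction_contractHom : IsSimpleContraction (contractHom hc) :=
  ⟨isContractionMor_contractHom hc, G.src e₀, G.tgt e₀, src_ne_tgt e₀, contractVertex_src_eq_tgt,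
    ⟨e₀, rfl, rfl⟩, fun _ => isContractionEdge_contractHom_iff hc,
    fun _ _ => eq_or_of_contractVertex_eq⟩

end ContractHom

section ContractLift

variable {e₀ : G.E} (hc : IsCoverEdge G e₀) {φ : G ⟶ H}

theorem vmap_contractVertex (hφ : IsContractionEdge φ e₀) (v : G.V) :
    vmap φ (contractVertex G e₀ v).val = vmap φ v := by
  rcases (contractVertex_eq_iff v _).mp rfl with h | ⟨h₁, h₂⟩
  · rw [← h]
  · rw [h₁, h₂, hφ.vmap_eq]

noncomputable def contractLift (φ : G ⟶ H) (hφ : IsContractionEdge φ e₀) :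
    contractNet hc ⟶ H :=
  ofEdgePaths (fun u => vmap φ u.val) fun k =>
    (edgePath φ k.1).cast (vmap_contractVertex hφ _).symm (vmap_contractVertex hφ _).symm

theorem contractHom_comp_contractLift (hφ : IsContractionEdge φ e₀) :
    contractHom hc ≫ contractLift hc φ hφ = φ := by
  refine hom_ext (vmap_contractVertex hφ) fun e => ?_
  by_cases h : IsParallel G e e₀
  · rw [edgeImage_comp, edgeImage_contractHom_of_isParallel hc h, List.flatMap_nil, eq_comm,
      ← isContractionEdge_iff]
    exact isContractionEdge_of_reaches φ (.refl _) (by rw [h.1, h.2]; exact hφ.vmap_eq)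
  · rw [edgeImage_comp, edgeImage_contractHom_of_not_isParallel hc h]
    exact (List.flatMap_singleton _ _).trans <|
      (edgeImage_ofEdgePaths _ _ _).trans (pathEdges_cast _ _ _)

end ContractLift

theorem IsContractionMor.isCompOf {G H : CausalNet} {φ : G ⟶ H} (hφ : IsContractionMor φ) :
    IsCompOf IsoOrSimpleContraction φ := by
  by_cases h : ∃ e, IsContractionEdge φ e
  · obtain ⟨e, he⟩ := h
    obtain ⟨e₀, he₀, hc⟩ := exists_isCoverEdge_isContractionEdge he
    have hσ := isSimpleContraction_contractHom hc
    have hfac := contractHom_comp_contractLift hc he₀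
    have hρ : IsContractionMor (contractLift hc φ he₀) := .of_comp hσ.1.1.1 (by rwa [hfac])
    rw [← hfac]
    exact .comp _ _ (.of _ (.inr hσ)) hρ.isCompOf
  · push Not at h
    exact .of _ (.inl (isIso_of_isContractionMor hφ h))
termination_by Nat.card G.V
decreasing_by exact card_contractNet_lt hc

theorem IsCompOf.isContractionMor {φ : G ⟶ H}
    (h : IsCompOf IsoOrSimpleContraction φ) : IsContractionMor φ := by
  induction h with
  | of φ hφ => exact hφ.elim (fun _ => isContractionMor_of_isIso φ) (·.1)
  | comp φ ψ _ _ hφ hψ => exact hφ.comp hψ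

theorem contraction_iff_comp_of_simple {G H : CausalNet} (lam : G ⟶ H) :
    IsContractionMor lam ↔ IsCompOf IsoOrSimpleContraction lam :=
  ⟨IsContractionMor.isCompOf, IsCompOf.isContractionMor⟩

end CausalNets
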